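/- Let G be a nonabelian finite subgroup of SU(2) whose image r(G) under the projection r: SU(2) → SO(3) = SU(2)/{±I} is abelian. Then G is conjugate in SU(2) to the quaternion group Q8. -/
import Mathlib


open Matrix

/-- `SU2` : the special unitary group of 2×2 complex matrices, as a subgroup of the
unitary group. -/
def SU2 : Subgroup (Matrix.unitaryGroup (Fin 2) ℂ) :=
  MonoidHom.ker (Matrix.detMonoidHom.comp (Submonoid.subtype _))

/-- Build an element of `SU2` from a unitary matrix of determinant one. -/
def mkSU2 (M : Matrix (Fin 2) (Fin 2) ℂ) (hU : M ∈ Matrix.unitaryGroup (Fin 2) ℂ)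
    (hdet : M.det = 1) : SU2 :=
  ⟨⟨M, hU⟩, MonoidHom.mem_ker.mpr hdet⟩

/-- `-I₂` as an element of `SU2`. -/
def negOne : SU2 :=
  mkSU2 (-1) (by rw [Matrix.mem_unitaryGroup_iff]; simp)
    (by simp [Matrix.det_neg])

lemma negOne_comm (g : SU2) : Commute g negOne := by
  apply Subtype.ext; apply Subtype.ext
  show (g.1.1 : Matrix (Fin 2) (Fin 2) ℂ) * (-1) = (-1) * g.1.1
  simp

instance : (Subgroup.zpowers negOne).Normal := by
  constructor
  intro n hn g
  obtain ⟨k, rfl⟩ := hn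
  show g * negOne ^ k * g⁻¹ ∈ Subgroup.zpowers negOne
  have h2 : g * negOne ^ k * g⁻¹ = negOne ^ k := by
    rw [((negOne_comm g).zpow_right k).eq, mul_assoc, mul_inv_cancel, mul_one]
  rw [h2]
  exact Subgroup.zpow_mem_zpowers negOne k

/-- The double cover projection `SU2 → SO3 = SU2/{±1}`. -/
def piSU2 : SU2 →* SU2 ⧸ Subgroup.zpowers negOne := QuotientGroup.mk' _

/-- `i·σ_z = diag(i, -i)` as an element of `SU2`. -/
def iEl : SU2 :=
  mkSU2 !![Complex.I, 0; 0, -Complex.I]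
    (by
      rw [Matrix.mem_unitaryGroup_iff]
      ext i j
      fin_cases i <;> fin_cases j <;>
        simp [Matrix.mul_apply, Fin.sum_univ_two, Matrix.star_apply, Complex.ext_iff])
    (by simp [Matrix.det_fin_two_of, Complex.I_mul_I])

/-- `[[0,1],[-1,0]]` as an element of `SU2`. -/
def jEl : SU2 :=
  mkSU2 !![0, 1; -1, 0]
    (by
      rw [Matrix.mem_unitaryGroup_iff]
      ext i j
      fin_cases i <;> fin_cases j <;>
        simp [Matrix.mul_apply, Fin.sum_univ_two, Matrix.star_apply, Complex.ext_iff])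
    (by simp [Matrix.det_fin_two_of])

/-- The quaternion group `Q8 = {±I, ±iσ_x, ±iσ_y, ±iσ_z}` realized in `SU2` as the
subgroup generated by `diag(i,-i)` and `[[0,1],[-1,0]]`. -/
def Q8sub : Subgroup SU2 := Subgroup.closure {iEl, jEl}

local notation "C[" z "]" => (starRingEnd ℂ) z

noncomputable def Mi : Matrix (Fin 2) (Fin 2) ℂ := !![Complex.I, 0; 0, -Complex.I]
def Mj : Matrix (Fin 2) (Fin 2) ℂ := !![0, 1; -1, 0]

lemma sq_negone (z : ℂ) (h : z*z = -1) : z = Complex.I ∨ z = -Complex.I := by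
  have h2 : (z-Complex.I)*(z+Complex.I) = 0 := by linear_combination h - Complex.I_sq
  rcases mul_eq_zero.mp h2 with h|h
  · left; linear_combination h
  · right; linear_combination h

lemma su2_shape (M : Matrix (Fin 2) (Fin 2) ℂ) (hu : star M * M = 1) (hd : M.det = 1) :
    M 1 1 = star (M 0 0) ∧ M 1 0 = -star (M 0 1) := by
  have hadj : star M = M.adjugate := by
    have h1 : M * M.adjugate = 1 := by rw [Matrix.mul_adjugate, hd, one_smul]
    calc star M = star M * (M * M.adjugate) := by rw [h1, mul_one]
    _ = (star M * M) * M.adjugate := by rw [mul_assoc]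
    _ = M.adjugate := by rw [hu, one_mul]
  rw [Matrix.adjugate_fin_two] at hadj
  have h00 := congrFun (congrFun hadj 0) 0
  have h01 := congrFun (congrFun hadj 0) 1
  simp [Matrix.conjTranspose_apply] at h00 h01
  refine ⟨by rw [← h00]; simp [Complex.star_def], ?_⟩
  have := congrArg star h01
  simp only [star_neg, star_star, Complex.star_def, Complex.conj_conj] at this
  simpa [Complex.star_def] using this

lemma trace_eq_zero (A B : Matrix (Fin 2) (Fin 2) ℂ)
    (hBu : star B * B = 1) (hBu' : B * star B = 1)
    (hanti : A * B = -(B * A)) : A.trace = 0 := by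
  have hBA : B * A = -(A * B) := by rw [hanti, neg_neg]
  have hBAB : B * A * star B = -A := by
    rw [hBA, neg_mul, mul_assoc, hBu', mul_one]
  have h1 : (B * A * star B).trace = A.trace := by
    rw [Matrix.trace_mul_comm (B*A) (star B), ← mul_assoc, hBu, one_mul]
  rw [hBAB, Matrix.trace_neg] at h1
  linear_combination -h1 / 2

lemma key (A B : Matrix (Fin 2) (Fin 2) ℂ)
    (hAu : star A * A = 1) (hAu' : A * star A = 1) (hAd : A.det = 1)
    (hBu : star B * B = 1) (hBu' : B * star B = 1) (hBd : B.det = 1)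
    (hanti : A * B = -(B * A)) :
    ∃ U : Matrix (Fin 2) (Fin 2) ℂ, star U * U = 1 ∧ U * star U = 1 ∧ U.det = 1 ∧
      A * U = U * Mi ∧ B * U = U * (-Mj) := by
  obtain ⟨hA11, hA10⟩ := su2_shape A hAu hAd
  obtain ⟨hB11, hB10⟩ := su2_shape B hBu hBd
  have htA := trace_eq_zero A B hBu hBu' hanti
  have htB : B.trace = 0 := by
    refine trace_eq_zero B A hAu hAu' ?_
    rw [hanti, neg_neg]
  rw [Matrix.trace_fin_two] at htA htB
  set a := A 0 0 with ha_def
  set b := A 0 1 with hb_def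
  set c := B 0 0 with hc_def
  set d := B 0 1 with hd_def
  simp only [Complex.star_def] at hA11 hA10 hB11 hB10
  have hA11' : A 1 1 = -a := by rw [hA11] at htA ⊢; linear_combination htA
  have hB11' : B 1 1 = -c := by rw [hB11] at htB ⊢; linear_combination htB
  have hca : C[a] = -a := by rw [← hA11, hA11']
  have hcc : C[c] = -c := by rw [← hB11, hB11']
  rw [Matrix.det_fin_two] at hAd hBd
  rw [hA11', hA10] at hAd
  rw [hB11', hB10] at hBd
  rw [← ha_def, ← hb_def] at hAd
  rw [← hc_def, ← hd_def] at hBd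
  have e00 := congrFun (congrFun hanti 0) 0
  simp [Matrix.mul_apply, Fin.sum_univ_two, hA10, hA11', hB10, hB11', ← ha_def, ← hb_def,
    ← hc_def, ← hd_def] at e00
  -- e00 : a * c + -(b * C[d]) = d * C[b] + -(c * a)
  obtain ⟨x, y, E1, E2, hv0⟩ :
      ∃ x y : ℂ, a*x + b*y = Complex.I*x ∧ -C[b]*x - a*y = Complex.I*y ∧ ¬(x = 0 ∧ y = 0) := by
    by_cases hb : b = 0
    · have hsq : a * a = -1 := by rw [hb] at hAd; simp at hAd; linear_combination -hAd
      rcases sq_negone a hsq with h | h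
      · exact ⟨1, 0, by rw [hb, h]; ring, by rw [hb, h]; simp, by simp⟩
      · exact ⟨0, 1, by rw [hb, h]; ring, by rw [hb, h]; simp, by simp⟩
    · refine ⟨b, Complex.I - a, by ring, ?_, by tauto⟩
      linear_combination -hAd - Complex.I_sq
  have E1s : a * C[x] - C[b] * C[y] = Complex.I * C[x] := by
    have h := congrArg (starRingEnd ℂ) E1
    simp only [map_add, map_sub, map_neg, _root_.map_mul, Complex.conj_I, Complex.conj_conj, hca] at h
    linear_combination -h
  have E2s : b * C[x] - a * C[y] = Complex.I * C[y] := by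
    have h := congrArg (starRingEnd ℂ) E2
    simp only [map_add, map_sub, map_neg, _root_.map_mul, Complex.conj_I, Complex.conj_conj, hca] at h
    linear_combination -h
  set p := c*x + d*y with hp_def
  set q := -C[d]*x - c*y with hq_def
  have hP : a*p + b*q = -Complex.I*p := by
    rw [hp_def, hq_def]; linear_combination x*e00 - c*E1 - d*E2
  have hQ : -C[b]*p - a*q = -Complex.I*q := by
    rw [hp_def, hq_def]; linear_combination y*e00 + C[d]*E1 + c*E2
  have hs : C[x]*p + C[y]*q = 0 := by
    have h1 : Complex.I * (C[x]*p + C[y]*q) = C[x]*(a*p + b*q) + C[y]*(-C[b]*p - a*q) := by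
      linear_combination -p*E1s - q*E2s
    rw [hP, hQ] at h1
    have h2 : (2*Complex.I) * (C[x]*p + C[y]*q) = 0 := by linear_combination h1
    rcases mul_eq_zero.mp h2 with h | h
    · exfalso; simp [Complex.I_ne_zero] at h
    · exact h
  have hsc : x*C[p] + y*C[q] = 0 := by
    have h := congrArg (starRingEnd ℂ) hs
    simpa [Complex.conj_conj] using h
  set N := Complex.normSq x + Complex.normSq y with hN_def
  have hNpos : 0 < N := by
    rcases not_and_or.mp hv0 with h | h
    · have := Complex.normSq_pos.mpr h
      have h2 := Complex.normSq_nonneg y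
      positivity
    · have := Complex.normSq_pos.mpr h
      have h2 := Complex.normSq_nonneg x
      positivity
  have hNc : (N:ℂ) = C[x]*x + C[y]*y := by
    rw [hN_def]; push_cast
    linear_combination -Complex.mul_conj x - Complex.mul_conj y
  have hw : C[p]*p + C[q]*q = (N:ℂ) := by
    rw [hNc, hp_def, hq_def]
    simp only [map_add, map_sub, map_neg, _root_.map_mul, Complex.conj_conj]
    linear_combination (x*C[x] + y*C[y])*hBd + (c*(x*C[x] + y*C[y]) + d*C[x]*y + C[d]*C[y]*x)*hcc
  set D := x*q - y*p with hD_def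
  have hDD : C[D]*D = (N:ℂ)*(N:ℂ) := by
    have key : C[D]*D = (C[x]*x + C[y]*y) * (C[p]*p + C[q]*q)
        - (C[x]*p + C[y]*q) * (x*C[p] + y*C[q]) := by
      rw [hD_def]; simp only [map_sub, _root_.map_mul]; ring
    rw [key, hs, hsc, hw, ← hNc]; ring
  have hNC0 : (N:ℂ) ≠ 0 := by
    simpa using Complex.ofReal_ne_zero.mpr (ne_of_gt hNpos)
  have hD0 : D ≠ 0 := by
    intro h
    rw [h, mul_zero] at hDD
    exact hNC0 (mul_self_eq_zero.mp hDD.symm)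
  obtain ⟨z, hz⟩ := IsAlgClosed.exists_pow_nat_eq D⁻¹ (n := 2) (by norm_num)
  have hz2 : z^2 * D = 1 := by rw [hz]; exact inv_mul_cancel₀ hD0
  have hzz : C[z] * z * (N:ℂ) = 1 := by
    have hzc : (C[z]) ^ 2 * z ^ 2 = (C[D])⁻¹ * D⁻¹ := by
      rw [← map_pow, hz, map_inv₀]
    have hsq : (C[z] * z * (N:ℂ)) ^ 2 = 1 := by
      calc (C[z] * z * (N:ℂ)) ^ 2 = ((C[z]) ^ 2 * z ^ 2) * ((N:ℂ)*(N:ℂ)) := by ring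
      _ = ((C[D])⁻¹ * D⁻¹) * (C[D] * D) := by rw [hzc, hDD]
      _ = (C[D] * D)⁻¹ * (C[D] * D) := by rw [mul_inv]
      _ = 1 := inv_mul_cancel₀ (by rw [hDD]; exact mul_ne_zero hNC0 hNC0)
    have hform : C[z] * z * (N:ℂ) = ((Complex.normSq z * N : ℝ) : ℂ) := by
      push_cast; linear_combination (N:ℂ) * Complex.mul_conj z
    rw [hform] at hsq ⊢
    have hreal : (Complex.normSq z * N) ^ 2 = 1 := by exact_mod_cast hsq
    have hnn : 0 ≤ Complex.normSq z * N := mul_nonneg (Complex.normSq_nonneg z) hNpos.le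
    have h1 : Complex.normSq z * N = 1 := by nlinarith
    rw [h1]; norm_num
  have hone : (1 : Matrix (Fin 2) (Fin 2) ℂ) = !![1, 0; 0, 1] := by
    rw [Matrix.one_fin_two]
  have hsUU : star (!![z*x, z*p; z*y, z*q]) * !![z*x, z*p; z*y, z*q] = 1 := by
    rw [hone]
    ext i j
    fin_cases i <;> fin_cases j
    · simp only [Matrix.mul_apply, Fin.sum_univ_two, Fin.zero_eta, Fin.mk_one,
        Matrix.cons_val', Matrix.cons_val_zero, Matrix.cons_val_one, Matrix.head_cons,
        Matrix.head_fin_const, Matrix.empty_val', Matrix.cons_val_fin_one, Matrix.neg_apply,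
        Matrix.conjTranspose_apply, Matrix.star_apply, Matrix.of_apply, Complex.star_def, _root_.map_mul, hA10, hA11', hB10, hB11',
        ← ha_def, ← hb_def, ← hc_def, ← hd_def]
      linear_combination hzz - C[z] * z * hNc
    · simp only [Matrix.mul_apply, Fin.sum_univ_two, Fin.zero_eta, Fin.mk_one,
        Matrix.cons_val', Matrix.cons_val_zero, Matrix.cons_val_one, Matrix.head_cons,
        Matrix.head_fin_const, Matrix.empty_val', Matrix.cons_val_fin_one, Matrix.neg_apply,
        Matrix.conjTranspose_apply, Matrix.star_apply, Matrix.of_apply, Complex.star_def, _root_.map_mul, hA10, hA11', hB10, hB11',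
        ← ha_def, ← hb_def, ← hc_def, ← hd_def]
      linear_combination C[z] * z * hs
    · simp only [Matrix.mul_apply, Fin.sum_univ_two, Fin.zero_eta, Fin.mk_one,
        Matrix.cons_val', Matrix.cons_val_zero, Matrix.cons_val_one, Matrix.head_cons,
        Matrix.head_fin_const, Matrix.empty_val', Matrix.cons_val_fin_one, Matrix.neg_apply,
        Matrix.conjTranspose_apply, Matrix.star_apply, Matrix.of_apply, Complex.star_def, _root_.map_mul, hA10, hA11', hB10, hB11',
        ← ha_def, ← hb_def, ← hc_def, ← hd_def]
      linear_combination C[z] * z * hsc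
    · simp only [Matrix.mul_apply, Fin.sum_univ_two, Fin.zero_eta, Fin.mk_one,
        Matrix.cons_val', Matrix.cons_val_zero, Matrix.cons_val_one, Matrix.head_cons,
        Matrix.head_fin_const, Matrix.empty_val', Matrix.cons_val_fin_one, Matrix.neg_apply,
        Matrix.conjTranspose_apply, Matrix.star_apply, Matrix.of_apply, Complex.star_def, _root_.map_mul, hA10, hA11', hB10, hB11',
        ← ha_def, ← hb_def, ← hc_def, ← hd_def]
      linear_combination C[z] * z * hw + hzz
  refine ⟨!![z*x, z*p; z*y, z*q], hsUU, mul_eq_one_comm.mp hsUU, ?_, ?_, ?_⟩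
  · rw [Matrix.det_fin_two_of]
    linear_combination hz2 - z ^ 2 * hD_def
  · ext i j
    fin_cases i <;> fin_cases j
    · simp only [Mi, Matrix.mul_apply, Fin.sum_univ_two, Fin.zero_eta, Fin.mk_one,
        Matrix.cons_val', Matrix.cons_val_zero, Matrix.cons_val_one, Matrix.head_cons,
        Matrix.head_fin_const, Matrix.empty_val', Matrix.cons_val_fin_one, Matrix.neg_apply,
        Matrix.conjTranspose_apply, Matrix.star_apply, Matrix.of_apply, Complex.star_def, _root_.map_mul, hA10, hA11', hB10, hB11',
        ← ha_def, ← hb_def, ← hc_def, ← hd_def]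
      linear_combination z * E1
    · simp only [Mi, Matrix.mul_apply, Fin.sum_univ_two, Fin.zero_eta, Fin.mk_one,
        Matrix.cons_val', Matrix.cons_val_zero, Matrix.cons_val_one, Matrix.head_cons,
        Matrix.head_fin_const, Matrix.empty_val', Matrix.cons_val_fin_one, Matrix.neg_apply,
        Matrix.conjTranspose_apply, Matrix.star_apply, Matrix.of_apply, Complex.star_def, _root_.map_mul, hA10, hA11', hB10, hB11',
        ← ha_def, ← hb_def, ← hc_def, ← hd_def]
      linear_combination z * hP
    · simp only [Mi, Matrix.mul_apply, Fin.sum_univ_two, Fin.zero_eta, Fin.mk_one,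
        Matrix.cons_val', Matrix.cons_val_zero, Matrix.cons_val_one, Matrix.head_cons,
        Matrix.head_fin_const, Matrix.empty_val', Matrix.cons_val_fin_one, Matrix.neg_apply,
        Matrix.conjTranspose_apply, Matrix.star_apply, Matrix.of_apply, Complex.star_def, _root_.map_mul, hA10, hA11', hB10, hB11',
        ← ha_def, ← hb_def, ← hc_def, ← hd_def]
      linear_combination z * E2
    · simp only [Mi, Matrix.mul_apply, Fin.sum_univ_two, Fin.zero_eta, Fin.mk_one,
        Matrix.cons_val', Matrix.cons_val_zero, Matrix.cons_val_one, Matrix.head_cons,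
        Matrix.head_fin_const, Matrix.empty_val', Matrix.cons_val_fin_one, Matrix.neg_apply,
        Matrix.conjTranspose_apply, Matrix.star_apply, Matrix.of_apply, Complex.star_def, _root_.map_mul, hA10, hA11', hB10, hB11',
        ← ha_def, ← hb_def, ← hc_def, ← hd_def]
      linear_combination z * hQ
  · ext i j
    fin_cases i <;> fin_cases j
    · simp only [Mj, Matrix.mul_apply, Fin.sum_univ_two, Fin.zero_eta, Fin.mk_one,
        Matrix.cons_val', Matrix.cons_val_zero, Matrix.cons_val_one, Matrix.head_cons,
        Matrix.head_fin_const, Matrix.empty_val', Matrix.cons_val_fin_one, Matrix.neg_apply,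
        Matrix.conjTranspose_apply, Matrix.star_apply, Matrix.of_apply, Complex.star_def, _root_.map_mul, hA10, hA11', hB10, hB11',
        ← ha_def, ← hb_def, ← hc_def, ← hd_def]
      linear_combination -z * hp_def
    · simp only [Mj, Matrix.mul_apply, Fin.sum_univ_two, Fin.zero_eta, Fin.mk_one,
        Matrix.cons_val', Matrix.cons_val_zero, Matrix.cons_val_one, Matrix.head_cons,
        Matrix.head_fin_const, Matrix.empty_val', Matrix.cons_val_fin_one, Matrix.neg_apply,
        Matrix.conjTranspose_apply, Matrix.star_apply, Matrix.of_apply, Complex.star_def, _root_.map_mul, hA10, hA11', hB10, hB11',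
        ← ha_def, ← hb_def, ← hc_def, ← hd_def]
      linear_combination z*c*hp_def + z*d*hq_def - z*x*hBd
    · simp only [Mj, Matrix.mul_apply, Fin.sum_univ_two, Fin.zero_eta, Fin.mk_one,
        Matrix.cons_val', Matrix.cons_val_zero, Matrix.cons_val_one, Matrix.head_cons,
        Matrix.head_fin_const, Matrix.empty_val', Matrix.cons_val_fin_one, Matrix.neg_apply,
        Matrix.conjTranspose_apply, Matrix.star_apply, Matrix.of_apply, Complex.star_def, _root_.map_mul, hA10, hA11', hB10, hB11',
        ← ha_def, ← hb_def, ← hc_def, ← hd_def]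
      linear_combination -z * hq_def
    · simp only [Mj, Matrix.mul_apply, Fin.sum_univ_two, Fin.zero_eta, Fin.mk_one,
        Matrix.cons_val', Matrix.cons_val_zero, Matrix.cons_val_one, Matrix.head_cons,
        Matrix.head_fin_const, Matrix.empty_val', Matrix.cons_val_fin_one, Matrix.neg_apply,
        Matrix.conjTranspose_apply, Matrix.star_apply, Matrix.of_apply, Complex.star_def, _root_.map_mul, hA10, hA11', hB10, hB11',
        ← ha_def, ← hb_def, ← hc_def, ← hd_def]
      linear_combination -z*C[d]*hp_def - z*c*hq_def - z*y*hBd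

lemma sq_one (z : ℂ) (h : z*z = 1) : z = 1 ∨ z = -1 := by
  have h2 : (z-1)*(z+1) = 0 := by linear_combination h
  rcases mul_eq_zero.mp h2 with h|h
  · left; linear_combination h
  · right; linear_combination h


lemma classify (X : Matrix (Fin 2) (Fin 2) ℂ) (hd : X.det = 1)
    (h1 : X * Mi = Mi * X ∨ X * Mi = -(Mi * X))
    (h2 : X * Mj = Mj * X ∨ X * Mj = -(Mj * X)) :
    X = 1 ∨ X = -1 ∨ X = Mi ∨ X = -Mi ∨ X = Mj ∨ X = -Mj ∨ X = Mi*Mj ∨ X = -(Mi*Mj) := by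
  rw [Matrix.det_fin_two] at hd
  have hmk : Mi * Mj = !![0, Complex.I; Complex.I, 0] := by
    ext i j; fin_cases i <;> fin_cases j <;>
      simp [Mi, Mj, Matrix.mul_apply, Fin.sum_univ_two]
  rcases h1 with h1 | h1
  · have e01 := congrFun (congrFun h1 0) 1
    have e10 := congrFun (congrFun h1 1) 0
    simp [Mi, Matrix.mul_apply, Fin.sum_univ_two, Matrix.vecMul, dotProduct,
      Matrix.vecHead, Matrix.vecTail] at e01 e10
    have hX01 : X 0 1 = 0 := by
      have : (2*Complex.I) * X 0 1 = 0 := by linear_combination -e01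
      simpa [Complex.I_ne_zero] using mul_eq_zero.mp this
    have hX10 : X 1 0 = 0 := by
      have : (2*Complex.I) * X 1 0 = 0 := by linear_combination e10
      simpa [Complex.I_ne_zero] using mul_eq_zero.mp this
    rcases h2 with h2 | h2
    · have f01 := congrFun (congrFun h2 0) 1
      simp [Mj, Matrix.mul_apply, Fin.sum_univ_two, Matrix.vecMul, dotProduct,
        Matrix.vecHead, Matrix.vecTail] at f01
      -- f01 : X 0 0 = X 1 1
      have hsq : X 0 0 * X 0 0 = 1 := by
        rw [hX01, hX10] at hd; rw [← f01] at hd; linear_combination hd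
      rcases sq_one _ hsq with h | h
      · have h11 : X 1 1 = 1 := by rw [← f01, h]
        left; ext i j; fin_cases i <;> fin_cases j <;>
          simp [hX01, hX10, h, h11, Matrix.one_apply]
      · have h11 : X 1 1 = -1 := by rw [← f01, h]
        right; left; ext i j; fin_cases i <;> fin_cases j <;>
          simp [hX01, hX10, h, h11, Matrix.one_apply]
    · have f01 := congrFun (congrFun h2 0) 1
      simp [Mj, Matrix.mul_apply, Fin.sum_univ_two, Matrix.vecMul, dotProduct,
        Matrix.vecHead, Matrix.vecTail] at f01
      -- f01 : X 0 0 = -X 1 1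
      have h11e : X 1 1 = -X 0 0 := by linear_combination f01
      have hsq : X 0 0 * X 0 0 = -1 := by
        rw [hX01, hX10, h11e] at hd; linear_combination -hd
      rcases sq_negone _ hsq with h | h
      · have h11 : X 1 1 = -Complex.I := by rw [h11e, h]
        right; right; left; ext i j; fin_cases i <;> fin_cases j <;>
          simp [Mi, hX01, hX10, h, h11]
      · have h11 : X 1 1 = Complex.I := by rw [h11e, h]; ring
        right; right; right; left; ext i j; fin_cases i <;> fin_cases j <;>
          simp [Mi, hX01, hX10, h, h11]
  · have e00 := congrFun (congrFun h1 0) 0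
    have e11 := congrFun (congrFun h1 1) 1
    simp [Mi, Matrix.mul_apply, Fin.sum_univ_two, Matrix.vecMul, dotProduct,
      Matrix.vecHead, Matrix.vecTail] at e00 e11
    have hX00 : X 0 0 = 0 := by
      have : (2*Complex.I) * X 0 0 = 0 := by linear_combination e00
      simpa [Complex.I_ne_zero] using mul_eq_zero.mp this
    have hX11 : X 1 1 = 0 := by
      have : (2*Complex.I) * X 1 1 = 0 := by linear_combination -e11
      simpa [Complex.I_ne_zero] using mul_eq_zero.mp this
    rcases h2 with h2 | h2
    · have f00 := congrFun (congrFun h2 0) 0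
      simp [Mj, Matrix.mul_apply, Fin.sum_univ_two, Matrix.vecMul, dotProduct,
        Matrix.vecHead, Matrix.vecTail] at f00
      -- f00 : -X 0 1 = X 1 0
      have h10e : X 1 0 = -X 0 1 := by linear_combination -f00
      have hsq : X 0 1 * X 0 1 = 1 := by
        rw [hX00, hX11, h10e] at hd; linear_combination hd
      rcases sq_one _ hsq with h | h
      · have h10 : X 1 0 = -1 := by rw [h10e, h]
        right;right;right;right;left; ext i j; fin_cases i <;> fin_cases j <;>
          simp [Mj, hX00, hX11, h, h10]
      · have h10 : X 1 0 = 1 := by rw [h10e, h]; ring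
        right;right;right;right;right;left; ext i j; fin_cases i <;> fin_cases j <;>
          simp [Mj, hX00, hX11, h, h10]
    · have f00 := congrFun (congrFun h2 0) 0
      simp [Mj, Matrix.mul_apply, Fin.sum_univ_two, Matrix.vecMul, dotProduct,
        Matrix.vecHead, Matrix.vecTail] at f00
      -- f00 : X 0 1 = X 1 0  (check)
      have h10e : X 1 0 = X 0 1 := by linear_combination -f00
      have hsq : X 0 1 * X 0 1 = -1 := by
        rw [hX00, hX11, h10e] at hd; linear_combination -hd
      rcases sq_negone _ hsq with h | h
      · have h10 : X 1 0 = Complex.I := by rw [h10e, h]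
        right;right;right;right;right;right;left; rw [hmk];
        ext i j; fin_cases i <;> fin_cases j <;> simp [hX00, hX11, h, h10]
      · have h10 : X 1 0 = -Complex.I := by rw [h10e, h]
        right;right;right;right;right;right;right; rw [hmk]
        ext i j; fin_cases i <;> fin_cases j <;> simp [hX00, hX11, h, h10]


lemma su2_ext (g h : SU2) (h1 : g.1.1 = h.1.1) : g = h := Subtype.ext (Subtype.ext h1)

lemma negOne_sq : negOne * negOne = 1 := by
  apply su2_ext
  show (-1 : Matrix (Fin 2) (Fin 2) ℂ) * (-1) = 1
  simp

lemma zpowers_negOne (w : SU2) (hw : w ∈ Subgroup.zpowers negOne) : w = 1 ∨ w = negOne := by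
  obtain ⟨k, rfl⟩ := hw
  show negOne ^ k = 1 ∨ negOne ^ k = negOne
  have h2 : negOne ^ (2:ℤ) = 1 := by
    rw [zpow_two]; exact negOne_sq
  rcases Int.even_or_odd k with ⟨m, hm⟩ | ⟨m, hm⟩
  · left
    rw [hm, ← two_mul, _root_.zpow_mul, h2, _root_.one_zpow]
  · right
    rw [hm, _root_.zpow_add, _root_.zpow_mul, h2, _root_.one_zpow, one_mul, zpow_one]

lemma neg_matrix_iEl : (negOne * iEl).1.1 = -Mi := by
  show (-1 : Matrix (Fin 2) (Fin 2) ℂ) * iEl.1.1 = -Mi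
  rw [neg_one_mul]; rfl

lemma iEl_matrix : iEl.1.1 = Mi := rfl
lemma jEl_matrix : jEl.1.1 = Mj := rfl

lemma negOne_mem_Q8 : negOne ∈ Q8sub := by
  have h : negOne = iEl * iEl := by
    apply su2_ext
    show (-1 : Matrix (Fin 2) (Fin 2) ℂ) = Mi * Mi
    ext i j
    fin_cases i <;> fin_cases j <;>
      simp [Mi, Matrix.mul_apply, Fin.sum_univ_two, Complex.I_mul_I]
  rw [h]
  exact mul_mem (Subgroup.subset_closure (by simp)) (Subgroup.subset_closure (by simp))

lemma iEl_mem_Q8 : iEl ∈ Q8sub := Subgroup.subset_closure (by simp)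
lemma jEl_mem_Q8 : jEl ∈ Q8sub := Subgroup.subset_closure (by simp)

/-- A nonabelian finite subgroup of SU(2) whose image in `SO3 = SU2/{±1}` is abelian is
conjugate in SU(2) to the quaternion group `Q8`. -/
theorem finite_nonabelian_abelian_image_conj_Q8 (G : Subgroup SU2)
    (hfin : (G : Set SU2).Finite)
    (hnonab : ∃ a ∈ G, ∃ b ∈ G, a * b ≠ b * a)
    (hab : ∀ a ∈ G, ∀ b ∈ G, piSU2 a * piSU2 b = piSU2 b * piSU2 a) :
    ∃ g : SU2, Subgroup.map (MulAut.conj g).toMonoidHom G = Q8sub := by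
  classical
  -- dichotomy: any two elements of G commute or anticommute
  have dich : ∀ u ∈ G, ∀ v ∈ G, u * v = v * u ∨ u * v = v * u * negOne := by
    intro u hu v hv
    have h := hab u hu v hv
    rw [← _root_.map_mul, ← _root_.map_mul] at h
    obtain ⟨w, hw, hww⟩ := (QuotientGroup.mk'_eq_mk' _).mp h
    rcases zpowers_negOne w hw with rfl | rfl
    · left; rw [mul_one] at hww; exact hww
    · right
      rw [← hww, mul_assoc, negOne_sq, mul_one]
  obtain ⟨a, ha, b, hb, hne⟩ := hnonab
  have hanti : a * b = b * a * negOne := by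
    rcases dich a ha b hb with h | h
    · exact absurd h hne
    · exact h
  -- matrix level
  have hanti_m : a.1.1 * b.1.1 = -(b.1.1 * a.1.1) := by
    have h : (a*b).1.1 = (b*a*negOne).1.1 := congrArg (fun g : SU2 => g.1.1) hanti
    have h' : a.1.1 * b.1.1 = b.1.1 * a.1.1 * (-1) := h
    rw [mul_neg_one] at h'
    exact h'
  obtain ⟨U, hU1, hU2, hUd, hAU, hBU⟩ :=
    key a.1.1 b.1.1 a.1.2.1 a.1.2.2 a.2 b.1.2.1 b.1.2.2 b.2 hanti_m
  have hsUmem : star U ∈ Matrix.unitaryGroup (Fin 2) ℂ := by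
    constructor
    · rw [star_star]; exact hU2
    · rw [star_star]; exact hU1
  have hsUdet : (star U).det = 1 := by
    show (Uᴴ).det = 1
    rw [Matrix.det_conjTranspose, hUd, star_one]
  set g : SU2 := mkSU2 (star U) hsUmem hsUdet with hg_def
  have hginv : (g⁻¹).1.1 = U := by
    show star (star U) = U
    rw [star_star]
  have hconj : ∀ c : SU2, ((MulAut.conj g).toMonoidHom c).1.1 = star U * c.1.1 * U := by
    intro c
    show g.1.1 * c.1.1 * (g⁻¹).1.1 = star U * c.1.1 * U
    rw [hginv]; rfl
  have hMiU : star U * a.1.1 * U = Mi := by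
    rw [mul_assoc, hAU, ← mul_assoc, hU1, one_mul]
  have hMjU : star U * (b⁻¹).1.1 * U = Mj := by
    have h1 := congrArg star hBU
    rw [StarMul.star_mul, StarMul.star_mul] at h1
    have hstarMj : star (-Mj) = Mj := by
      ext i j
      fin_cases i <;> fin_cases j <;>
        simp [Mj, Matrix.star_apply, Matrix.conjTranspose_apply]
    rw [hstarMj] at h1
    show star U * star (b.1.1) * U = Mj
    rw [h1, mul_assoc, hU1, mul_one]
  refine ⟨g, le_antisymm ?_ ?_⟩
  · rintro w ⟨c, hc0, rfl⟩
    have hc : c ∈ G := hc0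
    -- X = star U * C * U satisfies the commutation dichotomies
    set X := star U * c.1.1 * U with hX_def
    have hcd : (c.1.1).det = 1 := c.2
    have hXdet : X.det = 1 := by
      rw [hX_def, Matrix.det_mul, Matrix.det_mul, hsUdet, hcd, hUd]
      norm_num
    have hcomm : ∀ m : Matrix (Fin 2) (Fin 2) ℂ, ∀ v : SU2,
        (c * v = v * c ∨ c * v = v * c * negOne) → star U * v.1.1 * U = m →
        X * m = m * X ∨ X * m = -(m * X) := by
      intro m v hdv hm
      have hXm : X * m = star U * (c.1.1 * v.1.1) * U := by
        rw [hX_def, ← hm]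
        calc (star U * c.1.1 * U) * (star U * v.1.1 * U)
            = star U * c.1.1 * (U * star U) * (v.1.1 * U) := by
              simp only [mul_assoc]
          _ = star U * (c.1.1 * v.1.1) * U := by
              rw [hU2]; simp only [mul_assoc, one_mul, mul_one]
      have hmX : m * X = star U * (v.1.1 * c.1.1) * U := by
        rw [hX_def, ← hm]
        calc (star U * v.1.1 * U) * (star U * c.1.1 * U)
            = star U * v.1.1 * (U * star U) * (c.1.1 * U) := by
              simp only [mul_assoc]
          _ = star U * (v.1.1 * c.1.1) * U := by
              rw [hU2]; simp only [mul_assoc, one_mul, mul_one]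
      rcases hdv with h | h
      · left
        rw [hXm, hmX]
        have h2 : c.1.1 * v.1.1 = v.1.1 * c.1.1 := congrArg (fun g : SU2 => g.1.1) h
        rw [h2]
      · right
        rw [hXm, hmX]
        have h2 : c.1.1 * v.1.1 = v.1.1 * c.1.1 * (-1) :=
          congrArg (fun g : SU2 => g.1.1) h
        rw [mul_neg_one] at h2
        rw [h2]
        simp only [neg_mul, mul_neg]
    have h1 : X * Mi = Mi * X ∨ X * Mi = -(Mi * X) :=
      hcomm Mi a (dich c hc a ha) hMiU
    have h2 : X * Mj = Mj * X ∨ X * Mj = -(Mj * X) :=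
      hcomm Mj b⁻¹ (dich c hc b⁻¹ (inv_mem hb)) hMjU
    have hX : ((MulAut.conj g).toMonoidHom c).1.1 = X := hconj c
    rcases classify X hXdet h1 h2 with h|h|h|h|h|h|h|h
    · have : (MulAut.conj g).toMonoidHom c = 1 := su2_ext _ _ (by rw [hX, h]; rfl)
      rw [this]; exact one_mem _
    · have : (MulAut.conj g).toMonoidHom c = negOne := su2_ext _ _ (by rw [hX, h]; rfl)
      rw [this]; exact negOne_mem_Q8
    · have : (MulAut.conj g).toMonoidHom c = iEl := su2_ext _ _ (by rw [hX, h]; rfl)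
      rw [this]; exact iEl_mem_Q8
    · have : (MulAut.conj g).toMonoidHom c = negOne * iEl :=
        su2_ext _ _ (by rw [hX, h, neg_matrix_iEl])
      rw [this]; exact mul_mem negOne_mem_Q8 iEl_mem_Q8
    · have : (MulAut.conj g).toMonoidHom c = jEl := su2_ext _ _ (by rw [hX, h]; rfl)
      rw [this]; exact jEl_mem_Q8
    · have : (MulAut.conj g).toMonoidHom c = negOne * jEl := by
        apply su2_ext
        rw [hX, h]
        show -Mj = (-1 : Matrix (Fin 2) (Fin 2) ℂ) * Mj
        rw [neg_one_mul]
      rw [this]; exact mul_mem negOne_mem_Q8 jEl_mem_Q8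
    · have : (MulAut.conj g).toMonoidHom c = iEl * jEl := su2_ext _ _ (by rw [hX, h]; rfl)
      rw [this]; exact mul_mem iEl_mem_Q8 jEl_mem_Q8
    · have : (MulAut.conj g).toMonoidHom c = negOne * (iEl * jEl) := by
        apply su2_ext
        rw [hX, h]
        show -(Mi * Mj) = (-1 : Matrix (Fin 2) (Fin 2) ℂ) * (Mi * Mj)
        rw [neg_one_mul]
      rw [this]; exact mul_mem negOne_mem_Q8 (mul_mem iEl_mem_Q8 jEl_mem_Q8)
  · show Subgroup.closure {iEl, jEl} ≤ _
    rw [Subgroup.closure_le]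
    intro w hw
    rcases Set.mem_insert_iff.mp hw with rfl | hw'
    swap
    rcases Set.mem_singleton_iff.mp hw' with rfl
    rotate_left
    · exact ⟨a, ha, su2_ext _ _ (by rw [hconj a, hMiU]; rfl)⟩
    · exact ⟨b⁻¹, inv_mem hb, su2_ext _ _ (by rw [hconj b⁻¹, hMjU]; rfl)⟩
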